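/- Let 0 < α < 1 and α ≠ 1/2, and let L_α be Salem's singular function. Then L_α is differentiable with derivative zero at Lebesgue-almost every point of [0,1]. -/

import Mathlib

/-!
The equations force the increment of `L` over a dyadic interval to split between its two halves
in the ratio `α : 1 - α`, so all dyadic increments are nonnegative and the continuous `L` is
monotone, hence differentiable almost everywhere. At an interior point `x` where `L' x = c`, the
rescaled increments `2ⁿ Δₙ` over the dyadic intervals containing `x` tend to `c`, while each is
`2α` or `2(1 - α)` times the previous one; so consecutive terms differ by `|2α - 1|` times their
size, and since `α ≠ 1/2` this forces `c = 0`.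
-/

open MeasureTheory Set Filter Topology

noncomputable def dyadicIncrement (f : ℝ → ℝ) (n k : ℕ) : ℝ :=
  f (((k : ℝ) + 1) / 2 ^ n) - f ((k : ℝ) / 2 ^ n)

theorem div_two_pow_mem_Icc {t : ℝ} {n : ℕ} (h0 : 0 ≤ t) (h1 : t ≤ 2 ^ n) :
    t / 2 ^ n ∈ Icc (0 : ℝ) 1 :=
  ⟨by positivity, div_le_one_of_le₀ h1 (by positivity)⟩

theorem le_of_dyadicIncrement_nonneg {f : ℝ → ℝ} {n j k : ℕ}
    (h : ∀ i < k, 0 ≤ dyadicIncrement f n i) (hjk : j ≤ k) :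
    f (j / 2 ^ n) ≤ f (k / 2 ^ n) := by
  induction k, hjk using Nat.le_induction with
  | base => exact le_rfl
  | succ k _ ih =>
    have hk := h k k.lt_succ_self
    rw [dyadicIncrement] at hk
    push_cast
    linarith [ih fun i hi => h i (hi.trans k.lt_succ_self)]

theorem natFloor_mul_two_pow_div_le {x : ℝ} (hx : 0 ≤ x) (n : ℕ) :
    (⌊x * 2 ^ n⌋₊ : ℝ) / 2 ^ n ≤ x :=
  div_le_of_le_mul₀ (by positivity) hx (Nat.floor_le (by positivity))

theorem lt_natFloor_mul_two_pow_add_one_div (x : ℝ) (n : ℕ) :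
    x < ((⌊x * 2 ^ n⌋₊ : ℝ) + 1) / 2 ^ n :=
  (lt_div_iff₀ (by positivity)).2 (Nat.lt_floor_add_one _)

theorem tendsto_natFloor_mul_two_pow_div {x : ℝ} (hx : 0 ≤ x) :
    Tendsto (fun n : ℕ => (⌊x * 2 ^ n⌋₊ : ℝ) / 2 ^ n) atTop (𝓝 x) :=
  (tendsto_nat_floor_mul_div_atTop hx).comp (tendsto_pow_atTop_atTop_of_one_lt one_lt_two)

theorem tendsto_natFloor_mul_two_pow_add_one_div {x : ℝ} (hx : 0 ≤ x) :
    Tendsto (fun n : ℕ => ((⌊x * 2 ^ n⌋₊ : ℝ) + 1) / 2 ^ n) atTop (𝓝 x) := by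
  have hinv : Tendsto (fun n : ℕ => ((2 : ℝ) ^ n)⁻¹) atTop (𝓝 0) :=
    tendsto_inv_atTop_zero.comp (tendsto_pow_atTop_atTop_of_one_lt one_lt_two)
  simpa [add_div] using (tendsto_natFloor_mul_two_pow_div hx).add hinv

theorem monotoneOn_Icc_of_dyadicIncrement_nonneg {f : ℝ → ℝ} (hf : ContinuousOn f (Icc 0 1))
    (h : ∀ n k, k < 2 ^ n → 0 ≤ dyadicIncrement f n k) : MonotoneOn f (Icc 0 1) := by
  intro x hx y hy hxy
  have hgrid : ∀ z ∈ Icc (0 : ℝ) 1,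
      Tendsto (fun n : ℕ => f (⌊z * 2 ^ n⌋₊ / 2 ^ n)) atTop (𝓝 (f z)) := fun z hz =>
    (hf z hz).tendsto.comp <| tendsto_nhdsWithin_iff.2 ⟨tendsto_natFloor_mul_two_pow_div hz.1,
      Eventually.of_forall fun n => ⟨by positivity,
        (natFloor_mul_two_pow_div_le hz.1 n).trans hz.2⟩⟩
  refine le_of_tendsto_of_tendsto' (hgrid x hx) (hgrid y hy) fun n => ?_
  have hy2 : ⌊y * 2 ^ n⌋₊ ≤ 2 ^ n := Nat.floor_le_of_le <| by
    push_cast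
    exact mul_le_of_le_one_left (by positivity) hy.2
  exact le_of_dyadicIncrement_nonneg (fun i hi => h n i (hi.trans_le hy2))
    (Nat.floor_le_floor (mul_le_mul_of_nonneg_right hxy (by positivity)))

theorem HasDerivAt.tendsto_slope_of_le_of_le {f : ℝ → ℝ} {c x : ℝ} (hf : HasDerivAt f c x)
    {ι : Type*} {l : Filter ι} {u v : ι → ℝ}
    (hu : Tendsto u l (𝓝 x)) (hv : Tendsto v l (𝓝 x))
    (hux : ∀ i, u i ≤ x) (hxv : ∀ i, x ≤ v i) (huv : ∀ i, u i < v i) :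
    Tendsto (fun i => slope f (u i) (v i)) l (𝓝 c) := by
  rw [Metric.tendsto_nhds]
  intro ε hε
  have hlin : ∀ᶠ y in 𝓝 x, |f y - f x - (y - x) * c| ≤ ε / 2 * |y - x| := by
    simpa [Real.norm_eq_abs] using (hasDerivAt_iff_isLittleO.1 hf).def (half_pos hε)
  filter_upwards [hu.eventually hlin, hv.eventually hlin] with i hui hvi
  have hpos : 0 < v i - u i := sub_pos.2 (huv i)
  rw [abs_of_nonpos (sub_nonpos.2 (hux i))] at hui
  rw [abs_of_nonneg (sub_nonneg.2 (hxv i))] at hvi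
  have hslope : slope f (u i) (v i) - c =
      ((f (v i) - f x - (v i - x) * c) - (f (u i) - f x - (u i - x) * c)) / (v i - u i) := by
    rw [slope_def_field]
    field_simp
    ring
  rw [Real.dist_eq, hslope, abs_div, abs_of_pos hpos, div_lt_iff₀ hpos]
  calc _ ≤ |f (v i) - f x - (v i - x) * c| + |f (u i) - f x - (u i - x) * c| := abs_sub _ _
    _ ≤ ε / 2 * (v i - x) + ε / 2 * -(u i - x) := add_le_add hvi hui
    _ = ε / 2 * (v i - u i) := by ring
    _ < ε * (v i - u i) := mul_lt_mul_of_pos_right (half_lt_self hε) hpos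

theorem HasDerivAt.tendsto_two_pow_mul_dyadicIncrement {f : ℝ → ℝ} {c x : ℝ}
    (hf : HasDerivAt f c x) (hx : 0 ≤ x) :
    Tendsto (fun n : ℕ => 2 ^ n * dyadicIncrement f n ⌊x * 2 ^ n⌋₊) atTop (𝓝 c) := by
  have hslope : ∀ n k : ℕ,
      slope f (k / 2 ^ n) ((k + 1) / 2 ^ n) = 2 ^ n * dyadicIncrement f n k := by
    intro n k
    rw [slope_def_field, dyadicIncrement]
    field_simp
    ring
  simpa only [hslope] using hf.tendsto_slope_of_le_of_le (tendsto_natFloor_mul_two_pow_div hx)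
    (tendsto_natFloor_mul_two_pow_add_one_div hx) (natFloor_mul_two_pow_div_le hx)
    (fun n => (lt_natFloor_mul_two_pow_add_one_div x n).le)
    (fun n => div_lt_div_of_pos_right (lt_add_one _) (by positivity))

theorem eq_zero_of_tendsto_of_mul_abs_le_abs_sub_succ {r : ℕ → ℝ} {c d : ℝ}
    (hr : Tendsto r atTop (𝓝 c)) (hd : 0 < d) (h : ∀ n, d * |r n| ≤ |r (n + 1) - r n|) :
    c = 0 := by
  have hjump : Tendsto (fun n => |r (n + 1) - r n|) atTop (𝓝 0) := by
    simpa using ((hr.comp (tendsto_add_atTop_nat 1)).sub hr).abs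
  have hle := le_of_tendsto_of_tendsto' (hr.abs.const_mul d) hjump h
  exact abs_nonpos_iff.1 (nonpos_of_mul_nonpos_right hle hd)

structure SalemEquations (α : ℝ) (L : ℝ → ℝ) : Prop where
  map_zero : L 0 = 0
  map_one : L 1 = 1
  map_div_two : ∀ x ∈ Icc (0 : ℝ) 1, L (x / 2) = α * L x
  map_one_add_div_two : ∀ x ∈ Icc (0 : ℝ) 1, L ((1 + x) / 2) = (1 - α) * L x + α

theorem SalemEquations.of_Ico_of_Icc {α : ℝ} {L : ℝ → ℝ} (h0 : 0 < α) (h1 : α < 1)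
    (heq1 : ∀ x ∈ Ico (0 : ℝ) (1 / 2), L x = α * L (2 * x))
    (heq2 : ∀ x ∈ Icc (1 / 2 : ℝ) 1, L x = (1 - α) * L (2 * x - 1) + α) :
    SalemEquations α L := by
  have hL0 : L 0 = 0 := by
    have h := heq1 0 ⟨le_rfl, by norm_num⟩
    rw [mul_zero] at h
    nlinarith
  have hL1 : L 1 = 1 := by
    have h := heq2 1 ⟨by norm_num, le_rfl⟩
    norm_num at h
    nlinarith
  have hhalf : L (1 / 2) = α := by
    simpa [hL0] using heq2 (1 / 2) ⟨le_rfl, by norm_num⟩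
  refine ⟨hL0, hL1, fun x hx => ?_, fun x hx => ?_⟩
  · rcases hx.2.lt_or_eq with hx1 | rfl
    · rw [heq1 (x / 2) ⟨by linarith [hx.1], by linarith⟩]
      ring_nf
    · rw [hL1, mul_one, ← hhalf, one_div]
  · rw [heq2 ((1 + x) / 2) ⟨by linarith [hx.1], by linarith [hx.2]⟩]
    ring_nf

namespace SalemEquations

variable {α : ℝ} {L : ℝ → ℝ}

theorem dyadicIncrement_succ_of_lt (hL : SalemEquations α L) {n k : ℕ} (hk : k < 2 ^ n) :
    dyadicIncrement L (n + 1) k = α * dyadicIncrement L n k := by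
  have hk' : (k : ℝ) + 1 ≤ 2 ^ n := by exact_mod_cast hk
  simp only [dyadicIncrement, pow_succ, ← div_div]
  rw [hL.map_div_two _ (div_two_pow_mem_Icc (by positivity) hk'),
    hL.map_div_two _ (div_two_pow_mem_Icc (by positivity) (by linarith))]
  ring

theorem dyadicIncrement_two_pow_add (hL : SalemEquations α L) {n k : ℕ} (hk : k < 2 ^ n) :
    dyadicIncrement L (n + 1) (2 ^ n + k) = (1 - α) * dyadicIncrement L n k := by
  have hk' : (k : ℝ) + 1 ≤ 2 ^ n := by exact_mod_cast hk
  have hshift : ∀ t : ℝ, (2 ^ n + t) / 2 ^ (n + 1) = (1 + t / 2 ^ n) / 2 := fun t => by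
    field_simp
    ring
  simp only [dyadicIncrement, Nat.cast_add, Nat.cast_pow, Nat.cast_ofNat, add_assoc, hshift]
  rw [hL.map_one_add_div_two _ (div_two_pow_mem_Icc (by positivity) hk'),
    hL.map_one_add_div_two _ (div_two_pow_mem_Icc (by positivity) (by linarith))]
  ring

theorem dyadicIncrement_children (hL : SalemEquations α L) :
    ∀ n k, k < 2 ^ n → dyadicIncrement L (n + 1) (2 * k) = α * dyadicIncrement L n k ∧
      dyadicIncrement L (n + 1) (2 * k + 1) = (1 - α) * dyadicIncrement L n k := by
  intro n
  induction n with
  | zero =>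
    intro k hk
    obtain rfl : k = 0 := by simpa using hk
    exact ⟨hL.dyadicIncrement_succ_of_lt one_pos,
      by simpa using hL.dyadicIncrement_two_pow_add (n := 0) one_pos⟩
  | succ n ih =>
    intro k hk
    rcases lt_or_ge k (2 ^ n) with hkn | hkn
    · have h2k : 2 * k + 1 < 2 ^ (n + 1) := by rw [pow_succ]; omega
      rw [hL.dyadicIncrement_succ_of_lt h2k, hL.dyadicIncrement_succ_of_lt (by omega),
        (ih k hkn).1, (ih k hkn).2, hL.dyadicIncrement_succ_of_lt hkn]
      constructor <;> ring
    · obtain ⟨m, rfl⟩ := Nat.exists_eq_add_of_le hkn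
      have hm : m < 2 ^ n := by rw [pow_succ] at hk; omega
      have h2m : 2 * m + 1 < 2 ^ (n + 1) := by rw [pow_succ]; omega
      have heven : 2 * (2 ^ n + m) = 2 ^ (n + 1) + 2 * m := by ring
      rw [heven, add_assoc (2 ^ (n + 1)), hL.dyadicIncrement_two_pow_add h2m,
        hL.dyadicIncrement_two_pow_add (by omega),
        (ih m hm).1, (ih m hm).2, hL.dyadicIncrement_two_pow_add hm]
      constructor <;> ring

theorem dyadicIncrement_succ_eq_or (hL : SalemEquations α L) {n m : ℕ} (hm : m < 2 ^ (n + 1)) :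
    dyadicIncrement L (n + 1) m = α * dyadicIncrement L n (m / 2) ∨
      dyadicIncrement L (n + 1) m = (1 - α) * dyadicIncrement L n (m / 2) := by
  obtain ⟨k, rfl | rfl⟩ := Nat.even_or_odd' m
  · have hk : k < 2 ^ n := by rw [pow_succ] at hm; omega
    exact Or.inl (by simpa using (hL.dyadicIncrement_children n k hk).1)
  · have hk : k < 2 ^ n := by rw [pow_succ] at hm; omega
    exact Or.inr (by simpa [Nat.mul_add_div] using (hL.dyadicIncrement_children n k hk).2)

theorem dyadicIncrement_nonneg (hL : SalemEquations α L) (h0 : 0 ≤ α) (h1 : α ≤ 1) :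
    ∀ n k, k < 2 ^ n → 0 ≤ dyadicIncrement L n k := by
  intro n
  induction n with
  | zero =>
    intro k hk
    obtain rfl : k = 0 := by simpa using hk
    simp [dyadicIncrement, hL.map_zero, hL.map_one]
  | succ n ih =>
    intro m hm
    have hhalf := ih (m / 2) (by rw [pow_succ] at hm; omega)
    rcases hL.dyadicIncrement_succ_eq_or hm with h | h <;> rw [h]
    · exact mul_nonneg h0 hhalf
    · exact mul_nonneg (sub_nonneg.2 h1) hhalf

theorem eq_zero_of_hasDerivAt (hL : SalemEquations α L) (hα : α ≠ 1 / 2) {c x : ℝ}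
    (hx : x ∈ Ico 0 1) (hderiv : HasDerivAt L c x) : c = 0 := by
  refine eq_zero_of_tendsto_of_mul_abs_le_abs_sub_succ
    (hderiv.tendsto_two_pow_mul_dyadicIncrement hx.1) (d := |2 * α - 1|)
    (abs_pos.2 fun h => hα (by linarith)) fun n => le_of_eq ?_
  have hparent : ⌊x * 2 ^ (n + 1)⌋₊ / 2 = ⌊x * 2 ^ n⌋₊ := by
    rw [← Nat.floor_div_ofNat, pow_succ, ← mul_assoc, mul_div_cancel_right₀ _ two_ne_zero]
  have hlt : ⌊x * 2 ^ (n + 1)⌋₊ < 2 ^ (n + 1) :=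
    (Nat.floor_lt (mul_nonneg hx.1 (by positivity))).2 <| by
      push_cast
      exact mul_lt_of_lt_one_left (by positivity) hx.2
  rcases hL.dyadicIncrement_succ_eq_or hlt with h | h <;> rw [h, hparent]
  · rw [← abs_mul]
    ring_nf
  · rw [abs_sub_comm, ← abs_mul]
    ring_nf

end SalemEquations

theorem salem_deriv_zero_ae (α : ℝ) (h0 : 0 < α) (h1 : α < 1) (hne : α ≠ 1/2)
    (L : ℝ → ℝ)
    (hcont : ContinuousOn L (Set.Icc 0 1))
    (heq1 : ∀ x ∈ Set.Ico (0:ℝ) (1/2), L x = α * L (2*x))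
    (heq2 : ∀ x ∈ Set.Icc (1/2:ℝ) 1, L x = (1-α) * L (2*x - 1) + α) :
    ∀ᵐ x ∂(volume.restrict (Set.Icc (0:ℝ) 1)), HasDerivAt L 0 x := by
  have hL : SalemEquations α L := .of_Ico_of_Icc h0 h1 heq1 heq2
  have hmono : MonotoneOn L (Icc 0 1) :=
    monotoneOn_Icc_of_dyadicIncrement_nonneg hcont (hL.dyadicIncrement_nonneg h0.le h1.le)
  rw [Measure.restrict_congr_set Ioo_ae_eq_Icc.symm]
  filter_upwards [(hmono.mono Ioo_subset_Icc_self).ae_differentiableWithinAt measurableSet_Ioo,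
    ae_restrict_mem measurableSet_Ioo] with x hdiff hx
  have hderiv := (hdiff.differentiableAt (Ioo_mem_nhds hx.1 hx.2)).hasDerivAt
  rwa [hL.eq_zero_of_hasDerivAt hne ⟨hx.1.le, hx.2⟩ hderiv] at hderiv
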